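/- arXiv:1609.04101 — 5 statements merged into one kernel-verified Lean document; each statement's English description precedes it below -/
import Mathlib

section
/- If |A| ≥ 2, then f-equivalence is strictly contained in p-equivalence: there exist languages L₁, L₂ over A with L₁ ≃_p L₂ but not L₁ ≃_f L₂. -/
open Filter

/-- `mu L n` is the probability that a uniformly random string of length `n` lies in `L`. -/
noncomputable def mu {A : Type*} [Fintype A] (L : Set (List A)) (n : ℕ) : ℝ :=
  (Nat.card {s : List A // s.length = n ∧ s ∈ L} : ℝ) / (Fintype.card A : ℝ) ^ n

/-- Symmetric difference of two languages. -/
def sdiffL {A : Type*} (L₁ L₂ : Set (List A)) : Set (List A) := (L₁ \ L₂) ∪ (L₂ \ L₁)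

/-- `L₁ ≃_p L₂` : the probability of the symmetric difference tends to `0`. -/
def pEquiv {A : Type*} [Fintype A] (L₁ L₂ : Set (List A)) : Prop :=
  Filter.Tendsto (mu (sdiffL L₁ L₂)) Filter.atTop (nhds 0)

/-- `L₁ ≃_f L₂` : the symmetric difference is a finite set. -/
def fEquiv {A : Type*} (L₁ L₂ : Set (List A)) : Prop := (sdiffL L₁ L₂).Finite

theorem fEquiv_strict_subset_pEquiv {A : Type*} [Fintype A]
    (hA : 2 ≤ Fintype.card A) :
    ∃ L₁ L₂ : Set (List A), pEquiv L₁ L₂ ∧ ¬ fEquiv L₁ L₂ := by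
  have hpos : 0 < Fintype.card A := by omega
  obtain ⟨a⟩ := Fintype.card_pos_iff.mp hpos
  set L₁ : Set (List A) := {s | ∃ m, s = List.replicate m a} with hL₁
  have hsd : sdiffL L₁ (∅ : Set (List A)) = L₁ := by
    simp [sdiffL]
  refine ⟨L₁, ∅, ?_, ?_⟩
  · unfold pEquiv
    rw [hsd]
    have hmu : ∀ n, mu L₁ n = (1 / (Fintype.card A : ℝ)) ^ n := by
      intro n
      have hcard : Nat.card {s : List A // s.length = n ∧ s ∈ L₁} = 1 := by
        rw [Nat.card_eq_one_iff_unique]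
        constructor
        · constructor
          rintro ⟨s, hs, m, rfl⟩ ⟨t, ht, k, rfl⟩
          simp only [List.length_replicate] at hs ht
          subst hs; subst ht; rfl
        · exact ⟨⟨List.replicate n a, by simp, n, rfl⟩⟩
      simp [mu, hcard, div_pow]
    have : Tendsto (fun n : ℕ => (1 / (Fintype.card A : ℝ)) ^ n) atTop (nhds 0) := by
      refine tendsto_pow_atTop_nhds_zero_of_lt_one (by positivity) ?_
      rw [div_lt_one (by positivity)]
      exact_mod_cast by omega
    rw [show mu L₁ = (fun n : ℕ => (1 / (Fintype.card A : ℝ)) ^ n) from funext hmu]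
    exact this
  · unfold fEquiv
    rw [hsd]
    intro hfin
    have : L₁.Infinite := by
      apply Set.infinite_of_injective_forall_mem (f := fun m : ℕ => List.replicate m a)
        (hi := fun m k h => by simpa using congrArg List.length h)
      intro m; exact ⟨m, rfl⟩
    exact this hfin
end

section
/- (Lynch) For any regular language L over A, there exists a positive integer a such that for every integer b with 0 ≤ b < a, the limit lim_{n→∞} μ_{a·n+b}(L) exists (i.e., there is a real number l_b such that the sequence n ↦ μ_{a·n+b}(L) converges to l_b). -/
open Filter

/-- A language is regular if it is accepted by a DFA with finitely many states. -/
def IsRegularLang {A : Type*} (L : Set (List A)) : Prop :=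
  ∃ (σ : Type) (_ : Fintype σ) (M : DFA A σ), L = {s : List A | M.eval s ∈ M.accept}


open Finset Matrix

set_option linter.unusedSectionVars false
set_option linter.unusedVariables false
set_option maxHeartbeats 1000000

namespace LynchAux


variable {σ : Type*} [Fintype σ] [DecidableEq σ] [Nonempty σ]

def Stoch (Q : Matrix σ σ ℝ) : Prop := (∀ i j, 0 ≤ Q i j) ∧ ∀ i, ∑ j, Q i j = 1

lemma Stoch.mul {Q R : Matrix σ σ ℝ} (hQ : Stoch Q) (hR : Stoch R) : Stoch (Q * R) := by
  constructor
  · intro i j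
    exact Finset.sum_nonneg fun z _ => mul_nonneg (hQ.1 i z) (hR.1 z j)
  · intro i
    simp only [Matrix.mul_apply]
    rw [Finset.sum_comm]
    simp only [← Finset.mul_sum, hR.2]
    simpa using hQ.2 i

lemma Stoch.one : Stoch (1 : Matrix σ σ ℝ) := by
  constructor
  · intro i j
    by_cases h : i = j <;> simp [Matrix.one_apply, h]
  · intro i
    simp [Matrix.one_apply]

lemma Stoch.pow {Q : Matrix σ σ ℝ} (hQ : Stoch Q) (n : ℕ) : Stoch (Q ^ n) := by
  induction n with
  | zero => simpa using Stoch.one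
  | succ n ih => rw [pow_succ]; exact ih.mul hQ

lemma Stoch.le_one {Q : Matrix σ σ ℝ} (hQ : Stoch Q) (i j : σ) : Q i j ≤ 1 := by
  calc Q i j ≤ ∑ z, Q i z := Finset.single_le_sum (fun z _ => hQ.1 i z) (mem_univ j)
  _ = 1 := hQ.2 i

/-- one-step relation -/
def Rel (Q : Matrix σ σ ℝ) (i j : σ) : Prop := 0 < Q i j

/-- recurrent state -/
def Rec (Q : Matrix σ σ ℝ) (i : σ) : Prop := ∀ j, Rel Q i j → Rel Q j i

section

variable {Q : Matrix σ σ ℝ} (hQ : Stoch Q)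
  (hsupp : ∀ n, 1 ≤ n → ∀ i j, (0 < (Q ^ n) i j ↔ 0 < Q i j))

include hQ hsupp

lemma rel_trans {i z j : σ} (h1 : Rel Q i z) (h2 : Rel Q z j) : Rel Q i j := by
  have h2' : 0 < (Q ^ 2) i j := by
    rw [pow_two, Matrix.mul_apply]
    exact Finset.sum_pos' (fun w _ => mul_nonneg (hQ.1 i w) (hQ.1 w j))
      ⟨z, mem_univ z, mul_pos h1 h2⟩
  exact (hsupp 2 (by norm_num) i j).1 h2'

lemma exists_rel (i : σ) : ∃ j, Rel Q i j := by
  by_contra h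
  push_neg at h
  have : ∑ j, Q i j = 0 := Finset.sum_eq_zero fun j _ =>
    le_antisymm (not_lt.1 (h j)) (hQ.1 i j)
  rw [hQ.2 i] at this
  norm_num at this

lemma rec_self {i : σ} (hi : Rec Q i) : Rel Q i i := by
  obtain ⟨j, hj⟩ := exists_rel hQ hsupp i
  exact rel_trans hQ hsupp hj (hi j hj)

lemma rec_closed {i j : σ} (hi : Rec Q i) (hij : Rel Q i j) : Rec Q j := by
  intro w hjw
  have hiw : Rel Q i w := rel_trans hQ hsupp hij hjw
  have hwi : Rel Q w i := hi w hiw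
  exact rel_trans hQ hsupp hwi hij

open Classical in
lemma exists_rec (i : σ) : ∃ j, Rec Q j ∧ (Rel Q i j ∨ j = i) := by
  classical
  suffices H : ∀ n (i : σ), (univ.filter (fun j => Rel Q i j ∨ j = i)).card ≤ n →
      ∃ j, Rec Q j ∧ (Rel Q i j ∨ j = i) from H _ i le_rfl
  intro n
  induction n with
  | zero =>
    intro i h
    exfalso
    have : i ∈ univ.filter (fun j => Rel Q i j ∨ j = i) := by simp
    have := Finset.card_pos.2 ⟨i, this⟩
    omega
  | succ n IH =>
    intro i h
    by_cases hrec : Rec Q i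
    · exact ⟨i, hrec, Or.inr rfl⟩
    · rw [Rec] at hrec
      push_neg at hrec
      obtain ⟨y, hy, hny⟩ := hrec
      have hyne : y ≠ i := by
        rintro rfl; exact hny hy
      have hsub : (univ.filter (fun j => Rel Q y j ∨ j = y)) ⊆
          (univ.filter (fun j => Rel Q i j ∨ j = i)) := by
        intro j hj
        simp only [mem_filter, mem_univ, true_and] at hj ⊢
        left
        rcases hj with hj | rfl
        · exact rel_trans hQ hsupp hy hj
        · exact hy
      have hi_not : i ∉ (univ.filter (fun j => Rel Q y j ∨ j = y)) := by
        simp only [mem_filter, mem_univ, true_and]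
        rintro (hyi | rfl)
        · exact hny hyi
        · exact hny hy
      have hlt : (univ.filter (fun j => Rel Q y j ∨ j = y)).card <
          (univ.filter (fun j => Rel Q i j ∨ j = i)).card :=
        Finset.card_lt_card ⟨hsub, fun hcon => hi_not (hcon (by simp))⟩
      obtain ⟨j, hjrec, hcase⟩ := IH y (by omega)
      refine ⟨j, hjrec, Or.inl ?_⟩
      rcases hcase with hyj | rfl
      · exact rel_trans hQ hsupp hy hyj
      · exact hy

include hQ hsupp in
theorem stoch_converges (v : σ → ℝ) (hv : ∀ j, |v j| ≤ 1) (i : σ) :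
    ∃ l : ℝ, Tendsto (fun n => ((Q ^ n) *ᵥ v) i) atTop (nhds l) := by
  classical
  -- recurrent pairs and contraction constant
  set recP : Finset (σ × σ) :=
    univ.filter (fun p => Rec Q p.1 ∧ Rel Q p.1 p.2 ∧ Rel Q p.2 p.1) with hrecP
  obtain ⟨r0, hr0, -⟩ := exists_rec hQ hsupp (Classical.arbitrary σ)
  have hrecP_ne : recP.Nonempty :=
    ⟨(r0, r0), by simp [hrecP, hr0, rec_self hQ hsupp hr0]⟩
  set ε : ℝ := recP.inf' hrecP_ne (fun p => Q p.1 p.2) with hε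
  have hε_pos : 0 < ε := by
    rw [hε, Finset.lt_inf'_iff]
    intro p hp
    simp only [hrecP, mem_filter] at hp
    exact hp.2.2.1
  have hε_le : ε ≤ 1 :=
    le_trans (Finset.inf'_le _ hrecP_ne.choose_spec) (hQ.le_one _ _)
  -- transient states and escape constant
  set recS : Finset σ := univ.filter (Rec Q) with hrecS
  set transS : Finset σ := univ.filter (fun i => ¬ Rec Q i) with htransS
  set δ : ℝ := if h : transS.Nonempty then transS.inf' h (fun i => ∑ j ∈ recS, Q i j) else 1
    with hδ
  have hδ_pos : 0 < δ := by
    rw [hδ]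
    split
    · next h =>
      rw [Finset.lt_inf'_iff]
      intro w hw
      simp only [htransS, mem_filter, mem_univ, true_and] at hw
      obtain ⟨j, hjrec, hcase⟩ := exists_rec hQ hsupp w
      have hrel : Rel Q w j := by
        rcases hcase with h' | rfl
        · exact h'
        · exact absurd hjrec hw
      have hjmem : j ∈ recS := by simp [hrecS, hjrec]
      have : Q w j ≤ ∑ j ∈ recS, Q w j :=
        Finset.single_le_sum (fun z _ => hQ.1 w z) hjmem
      exact lt_of_lt_of_le hrel this
    · norm_num
  have hδ_le : δ ≤ 1 := by
    rw [hδ]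
    split
    · next h =>
      obtain ⟨w, hw⟩ := h
      refine le_trans (Finset.inf'_le _ hw) ?_
      calc ∑ j ∈ recS, Q w j ≤ ∑ j, Q w j :=
            Finset.sum_le_sum_of_subset_of_nonneg (Finset.filter_subset _ _)
              (fun z _ _ => hQ.1 w z)
        _ = 1 := hQ.2 w
    · exact le_refl 1

  -- the vector sequence
  set x : ℕ → σ → ℝ := fun n => (Q ^ n) *ᵥ v with hxdef
  have hx_abs : ∀ n j, |x n j| ≤ 1 := by
    intro n j
    have hst := hQ.pow n
    calc |x n j| = |∑ z, (Q ^ n) j z * v z| := by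
          simp [hxdef, Matrix.mulVec, dotProduct]
      _ ≤ ∑ z, |(Q ^ n) j z * v z| := Finset.abs_sum_le_sum_abs _ _
      _ ≤ ∑ z, (Q ^ n) j z := by
          refine Finset.sum_le_sum fun z _ => ?_
          rw [abs_mul, abs_of_nonneg (hst.1 j z)]
          calc (Q ^ n) j z * |v z| ≤ (Q ^ n) j z * 1 :=
                mul_le_mul_of_nonneg_left (hv z) (hst.1 j z)
            _ = (Q ^ n) j z := mul_one _
      _ = 1 := hst.2 j
  have hx_step : ∀ n j, x (n + 1) j = ∑ z, Q j z * x n z := by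
    intro n j
    have h1 : Q ^ (n + 1) = Q * Q ^ n := by rw [pow_succ']
    simp only [hxdef, h1, Matrix.mul_apply, Matrix.mulVec, dotProduct, Finset.sum_mul,
      Finset.mul_sum, mul_assoc]
    rw [Finset.sum_comm]
  have hx_shift : ∀ m k j, x (m + k) j = ∑ z, (Q ^ m) j z * x k z := by
    intro m k j
    have h1 : Q ^ (m + k) = Q ^ m * Q ^ k := pow_add Q m k
    simp only [hxdef, h1, Matrix.mul_apply, Matrix.mulVec, dotProduct, Finset.sum_mul,
      Finset.mul_sum, mul_assoc]
    rw [Finset.sum_comm]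
  -- recurrent rows never lead to transient states
  have t_rec_zero : ∀ n (j : σ), Rec Q j → ∑ z ∈ transS, (Q ^ n) j z = 0 := by
    intro n j hj
    refine Finset.sum_eq_zero fun z hz => ?_
    simp only [htransS, mem_filter, mem_univ, true_and] at hz
    by_contra hne
    have hpos : 0 < (Q ^ n) j z := lt_of_le_of_ne ((hQ.pow n).1 j z) (Ne.symm hne)
    match n with
    | 0 =>
      have : j = z := by
        by_contra hne2
        rw [pow_zero, Matrix.one_apply_ne hne2] at hpos
        exact lt_irrefl 0 hpos
      exact hz (this ▸ hj)
    | Nat.succ n =>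
      have hrel : Rel Q j z := (hsupp (n+1) (by omega) j z).1 hpos
      exact hz (rec_closed hQ hsupp hj hrel)
  -- transient mass decays geometrically
  have t_bound : ∀ n (w : σ), ∑ z ∈ transS, (Q ^ n) w z ≤ (1 - δ) ^ n := by
    intro n
    induction n with
    | zero =>
      intro w
      simp only [pow_zero]
      calc ∑ z ∈ transS, (1 : Matrix σ σ ℝ) w z ≤ ∑ z, (1 : Matrix σ σ ℝ) w z :=
            Finset.sum_le_sum_of_subset_of_nonneg (Finset.filter_subset _ _)
              (fun z _ _ => (hQ.pow 0).1 w z)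
        _ = 1 := by simp [Matrix.one_apply]
  -- row escape bound
    | succ n IH =>
      intro w
      have hrow : ∑ j ∈ transS, Q w j ≤ 1 - δ := by
        by_cases hw : Rec Q w
        · have h0 : ∑ j ∈ transS, Q w j = 0 := by
            have := t_rec_zero 1 w hw
            simpa [pow_one] using this
          rw [h0]; linarith
        · have hne : transS.Nonempty := ⟨w, by simp [htransS, hw]⟩
          have hδ' : δ = transS.inf' hne (fun i => ∑ j ∈ recS, Q i j) := by
            rw [hδ, dif_pos hne]
          have h1 : δ ≤ ∑ j ∈ recS, Q w j := by
            rw [hδ']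
            exact Finset.inf'_le _ (by simp [htransS, hw])
          have h2 : (∑ j ∈ recS, Q w j) + ∑ j ∈ transS, Q w j = 1 := by
            rw [hrecS, htransS]
            rw [Finset.sum_filter_add_sum_filter_not]
            exact hQ.2 w
          linarith
      have hsplit : ∑ z ∈ transS, (Q ^ (n+1)) w z = ∑ j, Q w j * ∑ z ∈ transS, (Q ^ n) j z := by
        have h1 : Q ^ (n + 1) = Q * Q ^ n := by rw [pow_succ']
        rw [h1]
        simp only [Matrix.mul_apply]
        rw [Finset.sum_comm]
        simp [Finset.mul_sum]
      rw [hsplit]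
      have hz1 : ∀ j ∈ recS, Q w j * ∑ z ∈ transS, (Q ^ n) j z = 0 := by
        intro j hj
        simp only [hrecS, mem_filter, mem_univ, true_and] at hj
        rw [t_rec_zero n j hj, mul_zero]
      have hsum_split : ∑ j, Q w j * ∑ z ∈ transS, (Q ^ n) j z
          = ∑ j ∈ transS, Q w j * ∑ z ∈ transS, (Q ^ n) j z := by
        rw [← Finset.sum_filter_add_sum_filter_not univ (Rec Q)]
        rw [show (univ.filter (fun i => ¬ Rec Q i)) = transS from rfl]
        rw [show (univ.filter (Rec Q)) = recS from rfl]
        rw [Finset.sum_eq_zero hz1, zero_add]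
      rw [hsum_split]
      have hδ1 : (0:ℝ) ≤ (1 - δ) ^ n := pow_nonneg (by linarith) n
      calc ∑ j ∈ transS, Q w j * ∑ z ∈ transS, (Q ^ n) j z
          ≤ ∑ j ∈ transS, Q w j * (1 - δ) ^ n := by
            refine Finset.sum_le_sum fun j _ => ?_
            exact mul_le_mul_of_nonneg_left (IH j) (hQ.1 w j)
        _ = (∑ j ∈ transS, Q w j) * (1 - δ) ^ n := by rw [Finset.sum_mul]
        _ ≤ (1 - δ) * (1 - δ) ^ n := mul_le_mul_of_nonneg_right hrow hδ1
        _ = (1 - δ) ^ (n + 1) := by rw [pow_succ']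

  -- oscillation within a recurrent class decays geometrically
  have rec_diff : ∀ (r : σ), Rec Q r → ∀ n k k', n ≤ k → n ≤ k' →
      |x k r - x k' r| ≤ 2 * (1 - ε) ^ n := by
    intro r hr
    set C : Finset σ := univ.filter (fun w => Rel Q r w ∧ Rel Q w r) with hCdef
    have hrC : r ∈ C := by
      have := rec_self hQ hsupp hr
      simp [hCdef, this]
    have hCne : C.Nonempty := ⟨r, hrC⟩
    have hCpair : ∀ w ∈ C, ∀ z ∈ C, (w, z) ∈ recP := by
      intro w hw z hz
      simp only [hCdef, mem_filter, mem_univ, true_and] at hw hz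
      simp only [hrecP, mem_filter, mem_univ, true_and]
      exact ⟨rec_closed hQ hsupp hr hw.1,
        rel_trans hQ hsupp hw.2 hz.1, rel_trans hQ hsupp hz.2 hw.1⟩
    have hCclosed : ∀ w ∈ C, ∀ z, z ∉ C → Q w z = 0 := by
      intro w hw z hz
      by_contra hne
      have hpos : Rel Q w z := lt_of_le_of_ne (hQ.1 w z) (Ne.symm hne)
      apply hz
      simp only [hCdef, mem_filter, mem_univ, true_and] at hw ⊢
      have h1 : Rel Q r z := rel_trans hQ hsupp hw.1 hpos
      exact ⟨h1, hr z h1⟩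
    set M : ℕ → ℝ := fun n => C.sup' hCne (x n) with hMdef
    set m : ℕ → ℝ := fun n => C.inf' hCne (x n) with hmdef
    have hmM : ∀ n, m n ≤ M n := fun n =>
      le_trans (Finset.inf'_le _ hrC) (Finset.le_sup' _ hrC)
    have hεQ : ∀ w ∈ C, ∀ z ∈ C, ε ≤ Q w z := by
      intro w hw z hz
      exact Finset.inf'_le (fun p => Q p.1 p.2) (hCpair w hw z hz)
    have upper : ∀ n, ∀ w ∈ C, x (n+1) w ≤ ε * m n + (1 - ε) * M n := by
      intro n w hw
      obtain ⟨z0, hz0C, hz0⟩ := Finset.exists_mem_eq_inf' hCne (x n)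
      have hxle : ∀ z, Q w z * x n z ≤ Q w z * M n := by
        intro z
        by_cases hz : z ∈ C
        · exact mul_le_mul_of_nonneg_left (Finset.le_sup' _ hz) (hQ.1 w z)
        · rw [hCclosed w hw z hz]; simp
      have heq : x (n+1) w = Q w z0 * x n z0 + ∑ z ∈ univ.erase z0, Q w z * x n z := by
        rw [hx_step n w, ← Finset.add_sum_erase univ _ (mem_univ z0)]
      have htail : ∑ z ∈ univ.erase z0, Q w z * x n z ≤ (1 - Q w z0) * M n := by
        calc ∑ z ∈ univ.erase z0, Q w z * x n z ≤ ∑ z ∈ univ.erase z0, Q w z * M n :=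
              Finset.sum_le_sum fun z _ => hxle z
          _ = (∑ z ∈ univ.erase z0, Q w z) * M n := by rw [Finset.sum_mul]
          _ = (1 - Q w z0) * M n := by
              rw [Finset.sum_erase_eq_sub (mem_univ z0), hQ.2 w]
      have hQwz0 : ε ≤ Q w z0 := hεQ w hw z0 hz0C
      have hxz0 : x n z0 = m n := hz0.symm
      have hmMn := hmM n
      calc x (n+1) w ≤ Q w z0 * m n + (1 - Q w z0) * M n := by
            rw [heq, hxz0]; linarith [htail]
        _ ≤ ε * m n + (1 - ε) * M n := by nlinarith
    have lower : ∀ n, ∀ w ∈ C, ε * M n + (1 - ε) * m n ≤ x (n+1) w := by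
      intro n w hw
      obtain ⟨z1, hz1C, hz1⟩ := Finset.exists_mem_eq_sup' hCne (x n)
      have hxle : ∀ z, Q w z * m n ≤ Q w z * x n z := by
        intro z
        by_cases hz : z ∈ C
        · exact mul_le_mul_of_nonneg_left (Finset.inf'_le _ hz) (hQ.1 w z)
        · rw [hCclosed w hw z hz]; simp
      have heq : x (n+1) w = Q w z1 * x n z1 + ∑ z ∈ univ.erase z1, Q w z * x n z := by
        rw [hx_step n w, ← Finset.add_sum_erase univ _ (mem_univ z1)]
      have htail : (1 - Q w z1) * m n ≤ ∑ z ∈ univ.erase z1, Q w z * x n z := by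
        calc (1 - Q w z1) * m n = (∑ z ∈ univ.erase z1, Q w z) * m n := by
              rw [Finset.sum_erase_eq_sub (mem_univ z1), hQ.2 w]
          _ = ∑ z ∈ univ.erase z1, Q w z * m n := by rw [Finset.sum_mul]
          _ ≤ ∑ z ∈ univ.erase z1, Q w z * x n z := Finset.sum_le_sum fun z _ => hxle z
      have hQwz1 : ε ≤ Q w z1 := hεQ w hw z1 hz1C
      have hxz1 : x n z1 = M n := hz1.symm
      have hmMn := hmM n
      calc ε * M n + (1 - ε) * m n ≤ Q w z1 * M n + (1 - Q w z1) * m n := by nlinarith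
        _ ≤ x (n+1) w := by rw [heq, hxz1]; linarith [htail]
    have hMstep : ∀ n, M (n+1) ≤ ε * m n + (1 - ε) * M n :=
      fun n => Finset.sup'_le _ _ (fun w hw => upper n w hw)
    have hmstep : ∀ n, ε * M n + (1 - ε) * m n ≤ m (n+1) :=
      fun n => Finset.le_inf' _ _ (fun w hw => lower n w hw)
    have hMmono : ∀ n, M (n+1) ≤ M n := by
      intro n; nlinarith [hMstep n, hmM n, hε_pos]
    have hmmono : ∀ n, m n ≤ m (n+1) := by
      intro n; nlinarith [hmstep n, hmM n, hε_pos]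
    have hosc : ∀ n, M n - m n ≤ 2 * (1 - ε) ^ n := by
      intro n; induction n with
      | zero =>
        have h1 : M 0 ≤ 1 := Finset.sup'_le _ _ fun w _ =>
          le_trans (le_abs_self _) (hx_abs 0 w)
        have h2 : -1 ≤ m 0 := Finset.le_inf' _ _ fun w _ =>
          le_trans (neg_abs_le _) (le_refl _) |>.trans' (neg_le_neg (hx_abs 0 w))
        simp only [pow_zero, mul_one]
        linarith
      | succ n IH =>
        have hp : (0:ℝ) ≤ (1 - ε) ^ n := pow_nonneg (by linarith) n
        calc M (n+1) - m (n+1) ≤ (1 - ε) * (M n - m n) := by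
              nlinarith [hMstep n, hmstep n, hmM n, hε_pos]
          _ ≤ (1 - ε) * (2 * (1 - ε) ^ n) :=
              mul_le_mul_of_nonneg_left IH (by linarith)
          _ = 2 * (1 - ε) ^ (n+1) := by rw [pow_succ']; ring
    have hMle : ∀ n k, n ≤ k → M k ≤ M n := by
      intro n k hk
      induction k, hk using Nat.le_induction with
      | base => exact le_rfl
      | succ k hk IH => exact le_trans (hMmono k) IH
    have hmle : ∀ n k, n ≤ k → m n ≤ m k := by
      intro n k hk
      induction k, hk using Nat.le_induction with
      | base => exact le_rfl
      | succ k hk IH => exact le_trans IH (hmmono k)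
    have hbetween : ∀ n k, n ≤ k → m n ≤ x k r ∧ x k r ≤ M n := by
      intro n k hk
      exact ⟨le_trans (hmle n k hk) (Finset.inf'_le _ hrC),
        le_trans (Finset.le_sup' _ hrC) (hMle n k hk)⟩
    intro n k k' hk hk'
    have h1 := hbetween n k hk
    have h2 := hbetween n k' hk'
    have h3 := hosc n
    rw [abs_sub_le_iff]
    constructor <;> linarith
  -- the key uniform Cauchy estimate
  have key : ∀ mm p n, 2 * mm ≤ n →
      |x (n + p) i - x n i| ≤ 2 * (1 - ε) ^ mm + 2 * (1 - δ) ^ mm := by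
    intro mm p n hn
    have h1 : x (n + p) i = ∑ j, (Q ^ mm) i j * x (n + p - mm) j := by
      have e : mm + (n + p - mm) = n + p := by omega
      have := hx_shift mm (n + p - mm) i
      rw [e] at this
      exact this
    have h2 : x n i = ∑ j, (Q ^ mm) i j * x (n - mm) j := by
      have e : mm + (n - mm) = n := by omega
      have := hx_shift mm (n - mm) i
      rw [e] at this
      exact this
    rw [h1, h2, ← Finset.sum_sub_distrib]
    have habs : |∑ j, ((Q ^ mm) i j * x (n + p - mm) j - (Q ^ mm) i j * x (n - mm) j)|
        ≤ ∑ j, (Q ^ mm) i j * |x (n + p - mm) j - x (n - mm) j| := by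
      refine le_trans (Finset.abs_sum_le_sum_abs _ _) (le_of_eq (Finset.sum_congr rfl ?_))
      intro j _
      rw [← mul_sub, abs_mul, abs_of_nonneg ((hQ.pow mm).1 i j)]
    refine le_trans habs ?_
    rw [← Finset.sum_filter_add_sum_filter_not univ (Rec Q)
      (fun j => (Q ^ mm) i j * |x (n + p - mm) j - x (n - mm) j|)]
    have hεp : (0:ℝ) ≤ 2 * (1 - ε) ^ mm :=
      mul_nonneg (by norm_num) (pow_nonneg (by linarith) mm)
    have hA : ∑ j ∈ univ.filter (Rec Q), (Q ^ mm) i j * |x (n + p - mm) j - x (n - mm) j|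
        ≤ 2 * (1 - ε) ^ mm := by
      calc ∑ j ∈ univ.filter (Rec Q), (Q ^ mm) i j * |x (n + p - mm) j - x (n - mm) j|
          ≤ ∑ j ∈ univ.filter (Rec Q), (Q ^ mm) i j * (2 * (1 - ε) ^ mm) := by
            refine Finset.sum_le_sum fun j hj => ?_
            simp only [mem_filter, mem_univ, true_and] at hj
            exact mul_le_mul_of_nonneg_left
              (rec_diff j hj mm (n + p - mm) (n - mm) (by omega) (by omega))
              ((hQ.pow mm).1 i j)
        _ = (∑ j ∈ univ.filter (Rec Q), (Q ^ mm) i j) * (2 * (1 - ε) ^ mm) := by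
            rw [Finset.sum_mul]
        _ ≤ 1 * (2 * (1 - ε) ^ mm) := by
            refine mul_le_mul_of_nonneg_right ?_ hεp
            calc ∑ j ∈ univ.filter (Rec Q), (Q ^ mm) i j ≤ ∑ j, (Q ^ mm) i j :=
                  Finset.sum_le_sum_of_subset_of_nonneg (Finset.filter_subset _ _)
                    (fun z _ _ => (hQ.pow mm).1 i z)
              _ = 1 := (hQ.pow mm).2 i
        _ = 2 * (1 - ε) ^ mm := one_mul _
    have hB : ∑ j ∈ univ.filter (fun j => ¬ Rec Q j),
        (Q ^ mm) i j * |x (n + p - mm) j - x (n - mm) j| ≤ 2 * (1 - δ) ^ mm := by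
      calc ∑ j ∈ univ.filter (fun j => ¬ Rec Q j),
            (Q ^ mm) i j * |x (n + p - mm) j - x (n - mm) j|
          ≤ ∑ j ∈ univ.filter (fun j => ¬ Rec Q j), (Q ^ mm) i j * 2 := by
            refine Finset.sum_le_sum fun j _ => ?_
            refine mul_le_mul_of_nonneg_left ?_ ((hQ.pow mm).1 i j)
            calc |x (n + p - mm) j - x (n - mm) j|
                ≤ |x (n + p - mm) j| + |x (n - mm) j| := abs_sub _ _
              _ ≤ 2 := by linarith [hx_abs (n + p - mm) j, hx_abs (n - mm) j]
        _ = (∑ j ∈ univ.filter (fun j => ¬ Rec Q j), (Q ^ mm) i j) * 2 := by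
            rw [Finset.sum_mul]
        _ ≤ (1 - δ) ^ mm * 2 := by
            refine mul_le_mul_of_nonneg_right ?_ (by norm_num)
            exact t_bound mm i
        _ = 2 * (1 - δ) ^ mm := by ring
    linarith
  -- conclude via Cauchy completeness
  have hcauchy : CauchySeq (fun n => x n i) := by
    rw [Metric.cauchySeq_iff']
    intro η hη
    have l1 : Tendsto (fun mm : ℕ => (1 - ε) ^ mm) atTop (nhds 0) :=
      tendsto_pow_atTop_nhds_zero_of_lt_one (by linarith) (by linarith)
    have l2 : Tendsto (fun mm : ℕ => (1 - δ) ^ mm) atTop (nhds 0) :=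
      tendsto_pow_atTop_nhds_zero_of_lt_one (by linarith) (by linarith)
    have hc1 : Tendsto (fun mm : ℕ => 2 * (1 - ε) ^ mm + 2 * (1 - δ) ^ mm) atTop (nhds 0) := by
      have := (l1.const_mul 2).add (l2.const_mul 2)
      simpa using this
    obtain ⟨mm, hmm⟩ := (hc1.eventually_lt_const hη).exists
    refine ⟨2 * mm, fun n hn => ?_⟩
    have hkey := key mm (n - 2 * mm) (2 * mm) le_rfl
    have he : 2 * mm + (n - 2 * mm) = n := by omega
    rw [he] at hkey
    rw [Real.dist_eq]
    exact lt_of_le_of_lt hkey hmm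
  obtain ⟨l, hl⟩ := cauchySeq_tendsto_of_complete hcauchy
  exact ⟨l, by simpa [hxdef] using hl⟩



end

section
variable {σ : Type*} [Fintype σ] [DecidableEq σ] [Nonempty σ]
variable {Q : Matrix σ σ ℝ} (hQ : Stoch Q)

lemma supp_mul_iff {A B : Matrix σ σ ℝ} (hA : ∀ i j, 0 ≤ A i j) (hB : ∀ i j, 0 ≤ B i j)
    (i j : σ) : 0 < (A * B) i j ↔ ∃ z, 0 < A i z ∧ 0 < B z j := by
  rw [Matrix.mul_apply]
  constructor
  · intro h
    by_contra hc
    push_neg at hc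
    have : ∀ z ∈ univ, A i z * B z j = 0 := by
      intro z _
      rcases lt_or_eq_of_le (hA i z) with h1 | h1
      · have := hc z h1
        have h2 : B z j = 0 := le_antisymm this (hB z j)
        rw [h2, mul_zero]
      · rw [← h1, zero_mul]
    rw [Finset.sum_eq_zero this] at h
    exact lt_irrefl 0 h
  · rintro ⟨z, hz1, hz2⟩
    exact Finset.sum_pos' (fun w _ => mul_nonneg (hA i w) (hB w j))
      ⟨z, mem_univ z, mul_pos hz1 hz2⟩

include hQ

/-- the support of `Q ^ (n+1)` as a finset -/
noncomputable def suppF (Q : Matrix σ σ ℝ) (n : ℕ) : Finset (σ × σ) := by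
  classical exact univ.filter (fun p => 0 < (Q ^ n) p.1 p.2)

omit hQ

lemma mem_suppF {n : ℕ} {p : σ × σ} : p ∈ suppF Q n ↔ 0 < (Q ^ n) p.1 p.2 := by
  simp [suppF]

include hQ

lemma suppF_det {n k : ℕ} (h : suppF Q n = suppF Q k) : suppF Q (n + 1) = suppF Q (k + 1) := by
  ext p
  have hn : ∀ m, Q ^ (m + 1) = Q * Q ^ m := fun m => by rw [pow_succ']
  simp only [mem_suppF, hn, supp_mul_iff hQ.1 (fun i j => (hQ.pow _).1 i j)]
  constructor
  · rintro ⟨z, h1, h2⟩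
    refine ⟨z, h1, ?_⟩
    have := (mem_suppF (Q := Q) (n := n) (p := (z, p.2))).2 h2
    rw [h] at this
    exact mem_suppF.1 this
  · rintro ⟨z, h1, h2⟩
    refine ⟨z, h1, ?_⟩
    have := (mem_suppF (Q := Q) (n := k) (p := (z, p.2))).2 h2
    rw [← h] at this
    exact mem_suppF.1 this

lemma exists_period : ∃ a : ℕ, 0 < a ∧
    (∀ n, 1 ≤ n → ∀ i j, (0 < ((Q ^ a) ^ n) i j ↔ 0 < (Q ^ a) i j)) := by
  classical
  obtain ⟨m1, m2, hne, heq⟩ :=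
    Finite.exists_ne_map_eq_of_infinite (fun n : ℕ => suppF Q (n + 1))
  wlog hlt : m1 < m2 generalizing m1 m2
  · exact this m2 m1 hne.symm heq.symm (by omega)
  set s : ℕ := m1 + 1 with hs
  set t : ℕ := m2 - m1 with ht
  have hs1 : 1 ≤ s := by omega
  have ht1 : 1 ≤ t := by omega
  have hst : suppF Q s = suppF Q (s + t) := by
    have : s + t = m2 + 1 := by omega
    rw [this]; exact heq
  -- propagate: for all n ≥ s, suppF (n + t) = suppF n
  have hprop : ∀ n, s ≤ n → suppF Q (n + t) = suppF Q n := by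
    intro n hn
    induction n, hn using Nat.le_induction with
    | base => exact hst.symm
    | succ n hn IH =>
      have : n + 1 + t = (n + t) + 1 := by omega
      rw [this]
      exact suppF_det hQ IH
  -- iterate: for all u ≥ s and k, suppF (u + k*t) = suppF u
  have hiter : ∀ u, s ≤ u → ∀ k, suppF Q (u + k * t) = suppF Q u := by
    intro u hu k
    induction k with
    | zero => simp
    | succ k IH =>
      have e : u + (k + 1) * t = (u + k * t) + t := by ring
      rw [e, hprop _ (by omega), IH]
  refine ⟨s * t, by positivity, ?_⟩
  intro n hn i j
  have e1 : (Q ^ (s * t)) ^ n = Q ^ (s * t * n) := (pow_mul Q (s * t) n).symm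
  have e2 : s * t * n = s * t + (s * (n - 1)) * t := by
    have h : n - 1 + 1 = n := by omega
    conv_lhs => rw [← h]
    ring
  have e3 : suppF Q (s * t * n) = suppF Q (s * t) := by
    rw [e2]
    exact hiter (s * t) (Nat.le_mul_of_pos_right s (by omega)) (s * (n - 1))
  constructor
  · intro h
    have : (i, j) ∈ suppF Q (s * t * n) := mem_suppF.2 (by rw [← e1]; exact h)
    rw [e3] at this
    exact mem_suppF.1 this
  · intro h
    have : (i, j) ∈ suppF Q (s * t) := mem_suppF.2 h
    rw [← e3] at this
    have := mem_suppF.1 this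
    rw [← e1] at this
    exact this

end

lemma nat_card_sigma {ι : Type*} [Fintype ι] (T : ι → Type*) [∀ i, Finite (T i)] :
    Nat.card ((i : ι) × T i) = ∑ i, Nat.card (T i) := by
  classical
  letI : ∀ i, Fintype (T i) := fun i => Fintype.ofFinite _
  simp [Nat.card_eq_fintype_card, Fintype.card_sigma]

/-- peel the first letter off a constrained list -/
def consEquiv {A : Type*} (P : List A → Prop) (n : ℕ) :
    {s : List A // s.length = n + 1 ∧ P s} ≃ (x : A) × {s : List A // s.length = n ∧ P (x :: s)} where
  toFun := fun ⟨l, hl⟩ =>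
    match l, hl with
    | a :: t, h => ⟨a, t, by simpa using h⟩
    | [], h => absurd h.1 (by simp)
  invFun := fun ⟨a, t, ht⟩ => ⟨a :: t, by simpa using ht⟩
  left_inv := fun ⟨l, hl⟩ => by
    match l, hl with
    | a :: t, h => rfl
    | [], h => exact absurd h.1 (by simp)
  right_inv := fun ⟨a, t, ht⟩ => rfl

instance listFinite {A : Type*} [Finite A] (n : ℕ) (P : List A → Prop) :
    Finite {s : List A // s.length = n ∧ P s} :=
  ((List.finite_length_eq A n).subset (fun s hs => hs.1)).to_subtype

section

open scoped Classical

variable {A : Type*} [Fintype A] [Nonempty A] {σ : Type*} [Fintype σ] [DecidableEq σ]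
  (M : DFA A σ)

/-- number of accepted strings of length `n` starting from state `q` -/
noncomputable def cnt (q : σ) (n : ℕ) : ℕ :=
  Nat.card {s : List A // s.length = n ∧ M.evalFrom q s ∈ M.accept}

lemma cnt_zero (q : σ) : cnt M q 0 = if q ∈ M.accept then 1 else 0 := by
  by_cases h : q ∈ M.accept
  · rw [if_pos h]
    have e : {s : List A // s.length = 0 ∧ M.evalFrom q s ∈ M.accept} ≃ PUnit.{1} :=
      { toFun := fun _ => PUnit.unit
        invFun := fun _ => ⟨[], by simp [DFA.evalFrom, h]⟩
        left_inv := fun ⟨l, hl⟩ => by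
          have : l = [] := List.length_eq_zero_iff.1 hl.1
          subst this; rfl
        right_inv := fun _ => rfl }
    rw [cnt, Nat.card_congr e]
    simp
  · rw [if_neg h]
    have : IsEmpty {s : List A // s.length = 0 ∧ M.evalFrom q s ∈ M.accept} := by
      refine ⟨fun ⟨l, hl⟩ => ?_⟩
      have : l = [] := List.length_eq_zero_iff.1 hl.1
      subst this
      exact h (by simpa [DFA.evalFrom] using hl.2)
    rw [cnt, Nat.card_of_isEmpty]

lemma cnt_succ (q : σ) (n : ℕ) : cnt M q (n + 1) = ∑ x, cnt M (M.step q x) n := by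
  rw [cnt, Nat.card_congr (consEquiv (fun s => M.evalFrom q s ∈ M.accept) n)]
  rw [nat_card_sigma]
  refine Finset.sum_congr rfl fun x _ => ?_
  rw [cnt]
  exact Nat.card_congr (Equiv.subtypeEquivRight fun s => by simp [DFA.evalFrom])

/-- the transition probability matrix of a DFA under uniform random letters -/
noncomputable def tmat : Matrix σ σ ℝ := fun q q' =>
  ((univ.filter (fun x => M.step q x = q')).card : ℝ) / (Fintype.card A : ℝ)

lemma tmat_stoch : Stoch (tmat M) := by
  have hA : (0:ℝ) < (Fintype.card A : ℝ) := by
    exact_mod_cast Fintype.card_pos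
  constructor
  · intro i j
    exact div_nonneg (by positivity) (le_of_lt hA)
  · intro i
    simp only [tmat]
    rw [← Finset.sum_div]
    rw [div_eq_one_iff_eq (ne_of_gt hA)]
    rw [← Nat.cast_sum]
    congr 1
    exact (Finset.card_eq_sum_card_fiberwise (fun x _ => mem_univ (M.step i x))).symm

/-- acceptance indicator vector -/
noncomputable def vacc : σ → ℝ := fun q => if q ∈ M.accept then 1 else 0

lemma mulVec_pow_eq (n : ℕ) (q : σ) :
    ((tmat M ^ n) *ᵥ vacc M) q = (cnt M q n : ℝ) / (Fintype.card A : ℝ) ^ n := by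
  have hA : (0:ℝ) < (Fintype.card A : ℝ) := by exact_mod_cast Fintype.card_pos
  induction n generalizing q with
  | zero =>
    simp only [pow_zero, Matrix.one_mulVec, cnt_zero]
    simp only [vacc]
    split <;> simp
  | succ n IH =>
    have h1 : tmat M ^ (n + 1) = tmat M * tmat M ^ n := by rw [pow_succ']
    have h2 : ((tmat M ^ (n+1)) *ᵥ vacc M) q = ∑ q', tmat M q q' * ((tmat M ^ n) *ᵥ vacc M) q' := by
      rw [h1, ← Matrix.mulVec_mulVec]
      simp [Matrix.mulVec, dotProduct]
    rw [h2]
    have h3 : ∀ q', tmat M q q' * ((tmat M ^ n) *ᵥ vacc M) q'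
        = ((univ.filter (fun x => M.step q x = q')).card : ℝ) * (cnt M q' n : ℝ)
          / (Fintype.card A : ℝ) ^ (n + 1) := by
      intro q'
      rw [IH]
      simp only [tmat]
      rw [div_mul_div_comm, ← pow_succ']
    rw [Finset.sum_congr rfl (fun q' _ => h3 q'), ← Finset.sum_div]
    rw [cnt_succ]
    congr 1
    -- ∑ q', #fiber * cnt q' n = ∑ x, cnt (step q x) n
    have h4 : ∀ q', ((univ.filter (fun x => M.step q x = q')).card : ℝ) * (cnt M q' n : ℝ)
        = ∑ x ∈ univ.filter (fun x => M.step q x = q'), (cnt M q' n : ℝ) := by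
      intro q'
      rw [Finset.sum_const, nsmul_eq_mul]
    rw [Finset.sum_congr rfl (fun q' _ => h4 q')]
    rw [Finset.sum_fiberwise' univ (fun x => M.step q x) (fun q' => (cnt M q' n : ℝ))]
    push_cast
    rfl


end

lemma mulVec_abs_le {σ : Type*} [Fintype σ] {R : Matrix σ σ ℝ} (hR : Stoch R)
    {v : σ → ℝ} (hv : ∀ z, |v z| ≤ 1) (j : σ) : |(R *ᵥ v) j| ≤ 1 := by
  calc |(R *ᵥ v) j| = |∑ z, R j z * v z| := by simp [Matrix.mulVec, dotProduct]
    _ ≤ ∑ z, |R j z * v z| := Finset.abs_sum_le_sum_abs _ _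
    _ ≤ ∑ z, R j z := by
        refine Finset.sum_le_sum fun z _ => ?_
        rw [abs_mul, abs_of_nonneg (hR.1 j z)]
        calc R j z * |v z| ≤ R j z * 1 := mul_le_mul_of_nonneg_left (hv z) (hR.1 j z)
          _ = R j z := mul_one _
    _ = 1 := hR.2 j


end LynchAux

theorem lynch_convergence {A : Type*} [Fintype A] [Nonempty A] (L : Set (List A))
    (hL : IsRegularLang L) :
    ∃ a : ℕ, 0 < a ∧ ∀ b < a, ∃ l : ℝ,
      Filter.Tendsto (fun n => mu L (a * n + b)) Filter.atTop (nhds l) := by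
  classical
  obtain ⟨σ, fσ, M, rfl⟩ := hL
  haveI : Fintype σ := fσ
  haveI : Nonempty σ := ⟨M.start⟩

  have hPs : LynchAux.Stoch (LynchAux.tmat M) := LynchAux.tmat_stoch M
  obtain ⟨a, ha, hsupp⟩ := LynchAux.exists_period hPs
  refine ⟨a, ha, ?_⟩
  intro b hb
  set w : σ → ℝ := (LynchAux.tmat M ^ b) *ᵥ LynchAux.vacc M with hw
  have hv1 : ∀ z, |LynchAux.vacc M z| ≤ 1 := by
    intro z
    rw [LynchAux.vacc]
    split <;> simp
  have hw1 : ∀ j, |w j| ≤ 1 := fun j => LynchAux.mulVec_abs_le (hPs.pow b) hv1 j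
  obtain ⟨l, hl⟩ := LynchAux.stoch_converges (hPs.pow a) hsupp w hw1 M.start
  refine ⟨l, hl.congr ?_⟩
  intro n
  have e1 : (LynchAux.tmat M ^ a) ^ n * LynchAux.tmat M ^ b = LynchAux.tmat M ^ (a * n + b) := by
    rw [← pow_mul, ← pow_add]
  have e2 : (((LynchAux.tmat M ^ a) ^ n) *ᵥ w) M.start
      = ((LynchAux.tmat M ^ (a * n + b)) *ᵥ LynchAux.vacc M) M.start := by
    rw [hw, Matrix.mulVec_mulVec, e1]
  rw [e2, LynchAux.mulVec_pow_eq]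
  rw [mu]
  congr 1
end

section
/- For any regular language L over A, if μ*(L) = 0 (where μ*_n(L) = |{s ∈ A^{<n} : s ∈ L}| / |A^{<n}| tends to 0 as n → ∞), then μ(L) = 0 (the sequence μ_n(L) tends to 0). -/
/-!
If `q = |A| ≥ 2`, the strings of length `n` are a fraction at least `(q - 1) / q` of those of
length `< n + 1`, so `μ_n ≤ q / (q - 1) · μ*_{n+1}`; regularity is not needed here.
If `|A| = 1`, the only string of length `n` is `aⁿ`, and the run of a DFA on `a, a², …` is
eventually periodic, with period `p` from step `i` on. An accepted `aⁿ` with `n ≥ i` would force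
every `a^(n + kp)` into `L`, so `μ*` would stay above a positive constant along a subsequence.
Hence no `aⁿ` with `n ≥ i` lies in `L`, and `μ_n = 0` for `n ≥ i`.
-/

open Filter

/-- `muStar L n` : the probability that a uniformly random string of length `< n` lies in `L`. -/
noncomputable def muStar {A : Type*} [Fintype A] (L : Set (List A)) (n : ℕ) : ℝ :=
  (Nat.card {s : List A // s.length < n ∧ s ∈ L} : ℝ) /
    (∑ k ∈ Finset.range n, (Fintype.card A : ℝ) ^ k)

open Finset Function

theorem Function.exists_isPeriodicPt_iterate {α : Type*} [Finite α] (f : α → α) (x : α) :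
    ∃ i p, 0 < p ∧ IsPeriodicPt f p (f^[i] x) := by
  obtain ⟨i, j, hne, hij⟩ := Finite.exists_ne_map_eq_of_infinite (f^[·] x)
  rcases Nat.lt_or_gt_of_ne hne with h | h
  · refine ⟨i, j - i, by omega, ?_⟩
    rw [IsPeriodicPt, IsFixedPt, ← iterate_add_apply, Nat.sub_add_cancel h.le]
    exact hij.symm
  · refine ⟨j, i - j, by omega, ?_⟩
    rw [IsPeriodicPt, IsFixedPt, ← iterate_add_apply, Nat.sub_add_cancel h.le]
    exact hij

theorem Function.IsPeriodicPt.iterate_add_mul_of_le {α : Type*} {f : α → α} {x : α} {i p : ℕ}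
    (h : IsPeriodicPt f p (f^[i] x)) {n : ℕ} (hn : i ≤ n) (k : ℕ) :
    f^[n + k * p] x = f^[n] x := by
  obtain ⟨m, rfl⟩ := Nat.exists_eq_add_of_le hn
  have := (h.const_mul k).apply_iterate m
  rw [IsPeriodicPt, IsFixedPt, ← iterate_add_apply, ← iterate_add_apply, ← iterate_add_apply]
    at this
  rwa [show i + m + k * p = k * p + m + i by ring, add_comm i m]

theorem DFA.eval_replicate {α σ : Type*} (M : DFA α σ) (a : α) (n : ℕ) :
    M.eval (List.replicate n a) = (M.step · a)^[n] M.start := by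
  induction n with
  | zero => rfl
  | succ n ih => rw [List.replicate_succ', DFA.eval_append_singleton, ih, iterate_succ_apply']

theorem not_tendsto_card_filter_range_div_of_add_mul {P : ℕ → Prop} [DecidablePred P] {m p : ℕ}
    (hp : 0 < p) (hP : ∀ k, P (m + k * p)) :
    ¬ Tendsto (fun n : ℕ => (#{k ∈ range n | P k} : ℝ) / n) atTop (nhds 0) := by
  intro h
  have hcount (K : ℕ) : K + 1 ≤ #{k ∈ range (m + K * p + 1) | P k} := by
    have := card_le_card_of_injOn (s := range (K + 1))
      (t := {k ∈ range (m + K * p + 1) | P k}) (fun k => m + k * p)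
      (fun k hk => by
        have : k * p ≤ K * p := Nat.mul_le_mul_right p (Nat.lt_succ_iff.mp (mem_range.mp hk))
        exact mem_filter.mpr ⟨mem_range.mpr (by dsimp only; omega), hP k⟩)
      (fun x _ y _ hxy => Nat.eq_of_mul_eq_mul_right hp (by simpa using hxy))
    simpa using this
  have hbound (K : ℕ) :
      (1 : ℝ) / (m + p) ≤ (#{k ∈ range (m + K * p + 1) | P k} : ℝ) / ↑(m + K * p + 1) := by
    calc (1 : ℝ) / (m + p) ≤ (K + 1 : ℝ) / (m + K * p + 1) := by
          have hp1 : (1 : ℝ) ≤ p := by exact_mod_cast hp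
          rw [div_le_div_iff₀ (by positivity) (by positivity)]
          nlinarith [(K.cast_nonneg : (0:ℝ) ≤ K), (m.cast_nonneg : (0:ℝ) ≤ m)]
      _ ≤ _ := by push_cast; gcongr; exact_mod_cast hcount K
  have hlim : Tendsto (fun K : ℕ => m + K * p + 1) atTop atTop :=
    tendsto_atTop_mono (fun K => by have := Nat.le_mul_of_pos_right K hp; dsimp only [id]; omega)
      tendsto_id
  have hp' : (0 : ℝ) < p := by exact_mod_cast hp
  have hle : (1 : ℝ) / (m + p) ≤ 0 := ge_of_tendsto' (h.comp hlim) hbound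
  have hpos : (0 : ℝ) < 1 / (m + p) := by positivity
  linarith

section Language

variable {A : Type*} [Fintype A] (L : Set (List A))

theorem card_length_eq_le_card_length_lt_succ (n : ℕ) :
    Nat.card {s : List A // s.length = n ∧ s ∈ L} ≤
      Nat.card {s : List A // s.length < n + 1 ∧ s ∈ L} :=
  Nat.card_mono ((List.finite_length_lt A (n + 1)).subset fun _ hs => hs.1)
    fun _ hs => ⟨hs.1 ▸ n.lt_succ_self, hs.2⟩

theorem mu_le_mul_muStar_succ (hA : 1 < Fintype.card A) (n : ℕ) :
    mu L n ≤ (Fintype.card A : ℝ) / (Fintype.card A - 1) * muStar L (n + 1) := by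
  have hq : (1 : ℝ) < Fintype.card A := by exact_mod_cast hA
  set q : ℝ := (Fintype.card A : ℝ)
  have hgeom : (∑ k ∈ range (n + 1), q ^ k) * (q - 1) = q ^ (n + 1) - 1 := geom_sum_mul q (n + 1)
  have hD : 0 < ∑ k ∈ range (n + 1), q ^ k := by positivity
  have hN : (Nat.card {s : List A // s.length = n ∧ s ∈ L} : ℝ) ≤
      Nat.card {s : List A // s.length < n + 1 ∧ s ∈ L} := by
    exact_mod_cast card_length_eq_le_card_length_lt_succ L n
  rw [mu, muStar]
  set N : ℝ := (Nat.card {s : List A // s.length < n + 1 ∧ s ∈ L} : ℝ)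
  set D := ∑ k ∈ range (n + 1), q ^ k
  calc _ ≤ N / q ^ n := by gcongr
    _ = N * q / q ^ (n + 1) := by rw [pow_succ]; field_simp
    _ ≤ N * q / ((q - 1) * D) := by gcongr; linarith
    _ = q / (q - 1) * (N / D) := by field_simp

theorem mu_nonneg (n : ℕ) : 0 ≤ mu L n := by
  unfold mu
  positivity

theorem tendsto_mu_of_tendsto_muStar_of_one_lt_card (hA : 1 < Fintype.card A)
    (h : Tendsto (muStar L) atTop (nhds 0)) : Tendsto (mu L) atTop (nhds 0) := by
  have := (h.comp (tendsto_add_atTop_nat 1)).const_mul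
    ((Fintype.card A : ℝ) / (Fintype.card A - 1))
  rw [mul_zero] at this
  exact squeeze_zero (mu_nonneg L) (mu_le_mul_muStar_succ L hA) this

theorem mu_eq_zero_of_forall_length_eq_not_mem {n : ℕ} (h : ∀ s : List A, s.length = n → s ∉ L) :
    mu L n = 0 := by
  have : IsEmpty {s : List A // s.length = n ∧ s ∈ L} := ⟨fun s => h s s.2.1 s.2.2⟩
  simp [mu]

open Classical in
theorem card_filter_replicate_mem_le (a : A) (n : ℕ) :
    #{k ∈ range n | List.replicate k a ∈ L} ≤ Nat.card {s : List A // s.length < n ∧ s ∈ L} := by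
  rw [← Set.ncard_coe_finset, ← Nat.card_coe_set_eq]
  refine Set.ncard_le_ncard_of_injOn (List.replicate · a) (fun k hk => ?_)
    (fun k _ l _ hkl => by simpa using congrArg List.length hkl)
    ((List.finite_length_lt A n).subset fun _ hs => hs.1)
  simp only [coe_filter, mem_range, Set.mem_ofPred_eq] at hk
  exact ⟨by simpa using hk.1, hk.2⟩

open Classical in
theorem card_filter_replicate_mem_div_le_muStar (hA : Fintype.card A = 1) (a : A) (n : ℕ) :
    (#{k ∈ range n | List.replicate k a ∈ L} : ℝ) / n ≤ muStar L n := by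
  rw [muStar, hA]
  simp only [Nat.cast_one, one_pow, sum_const, card_range, nsmul_eq_mul, mul_one]
  gcongr
  exact_mod_cast card_filter_replicate_mem_le L a n

open Classical in
theorem tendsto_mu_of_tendsto_muStar_of_card_eq_one (hA : Fintype.card A = 1)
    (hL : IsRegularLang L) (h : Tendsto (muStar L) atTop (nhds 0)) :
    Tendsto (mu L) atTop (nhds 0) := by
  obtain ⟨a, ha⟩ := Fintype.card_eq_one_iff.mp hA
  have hdensity : Tendsto (fun n : ℕ => (#{k ∈ range n | List.replicate k a ∈ L} : ℝ) / n)
      atTop (nhds 0) :=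
    squeeze_zero (fun _ => by positivity) (card_filter_replicate_mem_div_le_muStar L hA a) h
  obtain ⟨σ, _, M, rfl⟩ := hL
  obtain ⟨i, p, hp, hper⟩ := exists_isPeriodicPt_iterate (M.step · a) M.start
  have hreject : ∀ n ≥ i, M.eval (List.replicate n a) ∉ M.accept := by
    intro n hn hacc
    refine not_tendsto_card_filter_range_div_of_add_mul hp (m := n) (fun k => ?_) hdensity
    rwa [Set.mem_ofPred_eq, DFA.eval_replicate, hper.iterate_add_mul_of_le hn,
      ← DFA.eval_replicate]
  refine tendsto_const_nhds.congr' ?_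
  filter_upwards [eventually_ge_atTop i] with n hn
  refine (mu_eq_zero_of_forall_length_eq_not_mem _ fun s hs => ?_).symm
  rw [List.eq_replicate_iff.mpr ⟨hs, fun b _ => ha b⟩]
  exact hreject n hn

end Language

theorem mu_zero_of_muStar_zero {A : Type*} [Fintype A] [Nonempty A] (L : Set (List A))
    (hL : IsRegularLang L)
    (h : Filter.Tendsto (muStar L) Filter.atTop (nhds 0)) :
    Filter.Tendsto (mu L) Filter.atTop (nhds 0) := by
  rcases Nat.lt_or_ge 1 (Fintype.card A) with hA | hA
  · exact tendsto_mu_of_tendsto_muStar_of_one_lt_card L hA h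
  · exact tendsto_mu_of_tendsto_muStar_of_card_eq_one L (hA.antisymm Fintype.card_pos) hL h
end

section
/- Let 𝒜 = (Q, A, δ, q⁰, F) be a DFA with finitely many states over a nonempty finite alphabet A. If for every accepting state q ∈ F with Reachable(q⁰, q) there exists a state q' ∈ Q such that Reachable(q, q') holds but Reachable(q', q) fails, then for every k ∈ ℕ, μ_k(L(𝒜)) ≤ |F| · (1 − 1/|A|^{|Q|})^{⌊k/|Q|⌋}; in particular μ_n(L(𝒜)) → 0 as n → ∞. -/
open Filter

/-- `Reachable M q q'` : there is a string driving `M` from state `q` to state `q'`. -/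
def Reachable {A σ : Type*} (M : DFA A σ) (q q' : σ) : Prop :=
  ∃ s : List A, M.evalFrom q s = q'

/-- The language accepted by the DFA `M`. -/
def langOf {A σ : Type*} (M : DFA A σ) : Set (List A) := {s : List A | M.eval s ∈ M.accept}

section Aux
set_option linter.unusedSectionVars false
variable {A σ : Type*} [Fintype A] [Nonempty A] [Fintype σ] (M : DFA A σ)
lemma reach_trans {p q r : σ} (h1 : Reachable M p q) (h2 : Reachable M q r) :
    Reachable M p r := by
  obtain ⟨u, hu⟩ := h1; obtain ⟨v, hv⟩ := h2
  exact ⟨u ++ v, by rw [M.evalFrom_of_append, hu, hv]⟩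

def toVec (ℓ : ℕ) (P : List A → Prop) (s : {s : List A // s.length = ℓ ∧ P s}) :
    List.Vector A ℓ := ⟨s.1, s.2.1⟩

lemma toVec_inj (ℓ : ℕ) (P : List A → Prop) : Function.Injective (toVec (A := A) ℓ P) :=
  fun a b hab => Subtype.ext (congrArg (fun v : List.Vector A ℓ => v.val) hab)

lemma finite_sub (ℓ : ℕ) (P : List A → Prop) :
    Finite {s : List A // s.length = ℓ ∧ P s} :=
  Finite.of_injective _ (toVec_inj (A := A) ℓ P)

lemma card_sub_le (ℓ : ℕ) (P : List A → Prop) :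
    Nat.card {s : List A // s.length = ℓ ∧ P s} ≤ Fintype.card A ^ ℓ := by
  have h := Nat.card_le_card_of_injective _ (toVec_inj (A := A) ℓ P)
  simpa [Nat.card_eq_fintype_card, card_vector] using h

lemma exists_escape {q : σ} (hq : ∃ q' : σ, Reachable M q q' ∧ ¬ Reachable M q' q)
    {p : σ} (hp : Reachable M p q) :
    ∃ t : List A, t.length = Fintype.card σ ∧ ¬ Reachable M (M.evalFrom p t) q := by
  obtain ⟨q', hqq', hnq⟩ := hq
  have hclosed : ∀ (r : σ) (w : List A), ¬ Reachable M r q → ¬ Reachable M (M.evalFrom r w) q :=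
    fun r w hr hc => hr (reach_trans M ⟨w, rfl⟩ hc)
  obtain ⟨u, hu⟩ := hp; obtain ⟨v, hv⟩ := hqq'
  have h0 : ¬ Reachable M (M.evalFrom p (u ++ v)) q := by
    rw [M.evalFrom_of_append, hu, hv]; exact hnq
  have key : ∀ (N : ℕ) (s : List A), s.length ≤ N → ¬ Reachable M (M.evalFrom p s) q →
      ∃ s' : List A, s'.length ≤ Fintype.card σ ∧ ¬ Reachable M (M.evalFrom p s') q := by
    intro N
    induction N with
    | zero => exact fun s hs h => ⟨s, le_trans hs (Nat.zero_le _), h⟩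
    | succ N ih =>
      intro s hs h
      by_cases hle : s.length ≤ Fintype.card σ
      · exact ⟨s, hle, h⟩
      · have hlen : Fintype.card σ ≤ s.length := by omega
        obtain ⟨q1, a, b, c, hsplit, hab, hbne, ha, hb, hc⟩ := M.evalFrom_split (s := p) hlen rfl
        apply ih (a ++ c)
        · have hL : s.length = a.length + b.length + c.length := by
            rw [hsplit]; simp [List.length_append]; omega
          have hb1 : 1 ≤ b.length := List.length_pos_iff.mpr hbne
          rw [List.length_append]; omega
        · rw [M.evalFrom_of_append, ha, hc]; exact h
  obtain ⟨s', hs'len, hs'⟩ := key (u ++ v).length (u ++ v) le_rfl h0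
  refine ⟨s' ++ List.replicate (Fintype.card σ - s'.length) (Classical.arbitrary A), ?_, ?_⟩
  · rw [List.length_append, List.length_replicate]; omega
  · rw [M.evalFrom_of_append]; exact hclosed _ _ hs'



lemma core (G : Set σ)
    (hback : ∀ (p : σ) (s : List A), M.evalFrom p s ∈ G → p ∈ G)
    (hesc : ∀ p ∈ G, ∃ t : List A, t.length = Fintype.card σ ∧ M.evalFrom p t ∉ G) :
    ∀ (m r : ℕ) (p : σ),
      Nat.card {s : List A // s.length = m * Fintype.card σ + r ∧ M.evalFrom p s ∈ G}
        ≤ (Fintype.card A ^ Fintype.card σ - 1) ^ m * Fintype.card A ^ r := by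
  intro m
  induction m with
  | zero => intro r p; simpa using card_sub_le r (fun s => M.evalFrom p s ∈ G)
  | succ m ih =>
    intro r p
    classical
    set n := Fintype.card σ with hn
    set c := Fintype.card A with hc
    set I := {u : List.Vector A n // M.evalFrom p u.1 ∈ G} with hI
    set Fib : I → Type _ :=
      fun u => {v : List A // v.length = m * n + r ∧ M.evalFrom (M.evalFrom p u.1.1) v ∈ G}
      with hFib
    haveI : ∀ u : I, Finite (Fib u) := fun u => finite_sub _ _
    -- injection into the sigma type
    have hinj : ∃ f : {s : List A // s.length = (m+1) * n + r ∧ M.evalFrom p s ∈ G} →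
        Σ u : I, Fib u, Function.Injective f := by
      have hlen : ∀ s : {s : List A // s.length = (m+1) * n + r ∧ M.evalFrom p s ∈ G},
          n ≤ s.1.length := by intro s; rw [s.2.1]; nlinarith [Nat.zero_le (m*n)]
      refine ⟨fun s => ⟨⟨⟨s.1.take n, by rw [List.length_take]; exact min_eq_left (hlen s)⟩,
          ?_⟩, ⟨s.1.drop n, ⟨by rw [List.length_drop, s.2.1]; ring_nf; omega, ?_⟩⟩⟩, ?_⟩
      · exact hback _ (s.1.drop n) (by
          rw [← M.evalFrom_of_append, List.take_append_drop]; exact s.2.2)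
      · rw [← M.evalFrom_of_append, List.take_append_drop]; exact s.2.2
      · intro s₁ s₂ hss
        have h1 : s₁.1.take n = s₂.1.take n :=
          congrArg (fun x : Σ u : I, Fib u => x.1.1.1) hss
        have h2 : s₁.1.drop n = s₂.1.drop n :=
          congrArg (fun x : Σ u : I, Fib u => x.2.1) hss
        apply Subtype.ext
        rw [← List.take_append_drop n s₁.1, ← List.take_append_drop n s₂.1, h1, h2]
    obtain ⟨f, hf⟩ := hinj
    haveI : Finite (Σ u : I, Fib u) := by infer_instance
    have hle1 : Nat.card {s : List A // s.length = (m+1) * n + r ∧ M.evalFrom p s ∈ G}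
        ≤ Nat.card (Σ u : I, Fib u) := Nat.card_le_card_of_injective f hf
    letI : ∀ u : I, Fintype (Fib u) := fun u => Fintype.ofFinite _
    have hcardI : Fintype.card I ≤ c ^ n - 1 := by
      by_cases hp : p ∈ G
      · obtain ⟨t, ht, htesc⟩ := hesc p hp
        have hlt : Fintype.card I < Fintype.card (List.Vector A n) :=
          Fintype.card_subtype_lt (x := ⟨t, ht⟩) htesc
        rw [card_vector] at hlt; simp only [← hc] at hlt
        omega
      · haveI : IsEmpty I := ⟨fun u => hp (hback p u.1.1 u.2)⟩
        simp
    have hsum : Nat.card (Σ u : I, Fib u) ≤ (c ^ n - 1) * ((c ^ n - 1) ^ m * c ^ r) := by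
      rw [Nat.card_eq_fintype_card, Fintype.card_sigma]
      calc ∑ u : I, Fintype.card (Fib u) ≤ ∑ _u : I, (c ^ n - 1) ^ m * c ^ r := by
            refine Finset.sum_le_sum fun u _ => ?_
            rw [← Nat.card_eq_fintype_card]
            exact ih r _
        _ = Fintype.card I * ((c ^ n - 1) ^ m * c ^ r) := by
            rw [Finset.sum_const, smul_eq_mul, Finset.card_univ]
        _ ≤ (c ^ n - 1) * ((c ^ n - 1) ^ m * c ^ r) :=
            Nat.mul_le_mul_right _ hcardI
    calc Nat.card {s : List A // s.length = (m+1) * n + r ∧ M.evalFrom p s ∈ G}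
        ≤ (c ^ n - 1) * ((c ^ n - 1) ^ m * c ^ r) := le_trans hle1 hsum
      _ = (c ^ n - 1) ^ (m + 1) * c ^ r := by ring

end Aux

theorem mu_le_of_escape {A σ : Type*} [Fintype A] [Nonempty A] [Fintype σ] (M : DFA A σ)
    (h : ∀ q ∈ M.accept, Reachable M M.start q →
      ∃ q' : σ, Reachable M q q' ∧ ¬ Reachable M q' q) :
    (∀ k : ℕ, mu (langOf M) k ≤
        (M.accept.ncard : ℝ) *
          (1 - 1 / (Fintype.card A : ℝ) ^ (Fintype.card σ)) ^ (k / Fintype.card σ)) ∧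
      Filter.Tendsto (mu (langOf M)) Filter.atTop (nhds 0) := by
  classical
  set n := Fintype.card σ with hn
  set c := Fintype.card A with hc
  have hc0 : 0 < c := Fintype.card_pos
  have hn0 : 0 < n := @Fintype.card_pos σ _ ⟨M.start⟩
  have hcn1 : 1 ≤ c ^ n := Nat.one_le_pow _ _ hc0
  -- per-accepting-state bound
  have perq : ∀ k : ℕ, ∀ q ∈ M.accept,
      Nat.card {s : List A // s.length = k ∧ M.eval s = q}
        ≤ (c ^ n - 1) ^ (k / n) * c ^ (k % n) := by
    intro k q hq
    set G : Set σ := {r | Reachable M r q} with hG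
    have hback : ∀ (p : σ) (s : List A), M.evalFrom p s ∈ G → p ∈ G :=
      fun p s hs => reach_trans M ⟨s, rfl⟩ hs
    have hkey : Nat.card {s : List A // s.length = k ∧ M.eval s = q}
        ≤ Nat.card {s : List A // s.length = k ∧ M.evalFrom M.start s ∈ G} := by
      haveI := finite_sub (A := A) k (fun s => M.evalFrom M.start s ∈ G)
      refine Nat.card_le_card_of_injective
        (fun s => ⟨s.1, s.2.1, by show Reachable M _ q; exact ⟨[], by simp only [DFA.evalFrom_nil]; exact s.2.2⟩⟩)
        (fun a b hab => Subtype.ext (congrArg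
          (fun v : {s : List A // s.length = k ∧ M.evalFrom M.start s ∈ G} => v.val) hab))
    by_cases hreach : Reachable M M.start q
    · have hesc : ∀ p ∈ G, ∃ t : List A, t.length = n ∧ M.evalFrom p t ∉ G :=
        fun p hp => exists_escape M (h q hq hreach) hp
      have hcore := core M G hback hesc (k / n) (k % n) M.start
      have hkn : k / n * n + k % n = k := Nat.div_add_mod' k n
      rw [hkn] at hcore
      exact le_trans hkey hcore
    · haveI : IsEmpty {s : List A // s.length = k ∧ M.evalFrom M.start s ∈ G} :=
        ⟨fun s => hreach (hback M.start s.1 s.2.2)⟩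
      have h0 : Nat.card {s : List A // s.length = k ∧ M.evalFrom M.start s ∈ G} = 0 :=
        Nat.card_of_isEmpty
      rw [h0] at hkey
      exact le_trans hkey (Nat.zero_le _)
  -- global nat bound
  have natbound : ∀ k : ℕ, Nat.card {s : List A // s.length = k ∧ s ∈ langOf M}
      ≤ M.accept.ncard * ((c ^ n - 1) ^ (k / n) * c ^ (k % n)) := by
    intro k
    set Fib : M.accept → Type _ :=
      fun q => {s : List A // s.length = k ∧ M.eval s = q.1} with hFib
    haveI : ∀ u : ↥M.accept, Finite (Fib u) := fun u => finite_sub _ _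
    letI : Fintype ↥M.accept := Fintype.ofFinite _
    letI : ∀ u : ↥M.accept, Fintype (Fib u) := fun u => Fintype.ofFinite _
    have hinj : Nat.card {s : List A // s.length = k ∧ s ∈ langOf M}
        ≤ Nat.card (Σ q : M.accept, Fib q) := by
      refine Nat.card_le_card_of_injective
        (fun s => ⟨⟨M.eval s.1, s.2.2⟩, ⟨s.1, s.2.1, rfl⟩⟩) ?_
      intro s₁ s₂ hss
      exact Subtype.ext (congrArg (fun x : Σ q : M.accept, Fib q => x.2.1) hss)
    have hsum : Nat.card (Σ q : M.accept, Fib q)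
        ≤ M.accept.ncard * ((c ^ n - 1) ^ (k / n) * c ^ (k % n)) := by
      rw [Nat.card_eq_fintype_card, Fintype.card_sigma]
      calc ∑ q : M.accept, Fintype.card (Fib q)
          ≤ ∑ _q : M.accept, (c ^ n - 1) ^ (k / n) * c ^ (k % n) := by
            refine Finset.sum_le_sum fun q _ => ?_
            rw [← Nat.card_eq_fintype_card]
            exact perq k q.1 q.2
        _ = Fintype.card ↥M.accept * ((c ^ n - 1) ^ (k / n) * c ^ (k % n)) := by
            rw [Finset.sum_const, smul_eq_mul, Finset.card_univ]
        _ = M.accept.ncard * ((c ^ n - 1) ^ (k / n) * c ^ (k % n)) := by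
            rw [Set.ncard_eq_toFinset_card']
            congr 1
            simp [Set.toFinset_card]
    exact le_trans hinj hsum
  -- real bound
  set x : ℝ := 1 - 1 / (c : ℝ) ^ n with hx
  have hcnR : (1 : ℝ) ≤ (c : ℝ) ^ n := by exact_mod_cast hcn1
  have hcnR0 : (0 : ℝ) < (c : ℝ) ^ n := by positivity
  have hxval : ((c ^ n - 1 : ℕ) : ℝ) = (c : ℝ) ^ n * x := by
    rw [Nat.cast_sub hcn1, hx]
    push_cast
    field_simp
  have hx0 : 0 ≤ x := by
    rw [hx, sub_nonneg]
    rw [div_le_one hcnR0]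
    exact hcnR
  have hx1 : x < 1 := by
    rw [hx]
    have : 0 < 1 / (c : ℝ) ^ n := by positivity
    linarith
  have realbound : ∀ k : ℕ, mu (langOf M) k ≤ (M.accept.ncard : ℝ) * x ^ (k / n) := by
    intro k
    have hkn : n * (k / n) + k % n = k := Nat.div_add_mod k n
    have hpow : ((c : ℝ)) ^ k = ((c : ℝ) ^ n) ^ (k / n) * (c : ℝ) ^ (k % n) := by
      rw [← pow_mul, ← pow_add, hkn]
    have hnum : (Nat.card {s : List A // s.length = k ∧ s ∈ langOf M} : ℝ)
        ≤ (M.accept.ncard : ℝ) * (((c : ℝ) ^ n) ^ (k / n) * x ^ (k / n)) * (c : ℝ) ^ (k % n) := by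
      have := natbound k
      have hcast : ((M.accept.ncard * ((c ^ n - 1) ^ (k / n) * c ^ (k % n)) : ℕ) : ℝ)
          = (M.accept.ncard : ℝ) * (((c : ℝ) ^ n) ^ (k / n) * x ^ (k / n)) * (c : ℝ) ^ (k % n) := by
        push_cast [hxval]
        rw [mul_pow]
        ring
      calc (Nat.card {s : List A // s.length = k ∧ s ∈ langOf M} : ℝ)
          ≤ ((M.accept.ncard * ((c ^ n - 1) ^ (k / n) * c ^ (k % n)) : ℕ) : ℝ) := by
            exact_mod_cast this
        _ = _ := hcast
    have hck0 : (0 : ℝ) < (c : ℝ) ^ k := by positivity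
    show (Nat.card {s : List A // s.length = k ∧ s ∈ langOf M} : ℝ) / (c : ℝ) ^ k
        ≤ (M.accept.ncard : ℝ) * x ^ (k / n)
    rw [div_le_iff₀ hck0]
    calc (Nat.card {s : List A // s.length = k ∧ s ∈ langOf M} : ℝ)
        ≤ (M.accept.ncard : ℝ) * (((c : ℝ) ^ n) ^ (k / n) * x ^ (k / n)) * (c : ℝ) ^ (k % n) :=
          hnum
      _ = (M.accept.ncard : ℝ) * x ^ (k / n) * (c : ℝ) ^ k := by rw [hpow]; ring
  refine ⟨realbound, ?_⟩
  have hmu0 : ∀ k, 0 ≤ mu (langOf M) k := by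
    intro k
    apply div_nonneg (Nat.cast_nonneg _)
    positivity
  have htend : Tendsto (fun k : ℕ => (M.accept.ncard : ℝ) * x ^ (k / n)) atTop (nhds 0) := by
    have h1 : Tendsto (fun m : ℕ => (M.accept.ncard : ℝ) * x ^ m) atTop (nhds 0) := by
      have := (tendsto_pow_atTop_nhds_zero_of_lt_one hx0 hx1).const_mul (M.accept.ncard : ℝ)
      simpa using this
    have h2 : Tendsto (fun k : ℕ => k / n) atTop atTop := by
      refine tendsto_atTop_atTop.mpr fun b => ⟨b * n, fun a ha => ?_⟩
      exact (Nat.le_div_iff_mul_le hn0).mpr ha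
    exact h1.comp h2
  exact squeeze_zero hmu0 realbound htend
end

section
/- Let 𝒜 = (Q, A, δ, q⁰, F) be a DFA with finitely many states over a nonempty finite alphabet A. If there exists an accepting state q ∈ F with Reachable(q⁰, q) such that for every q' ∈ Q, Reachable(q, q') implies Reachable(q', q), then there exists ε > 0 such that μ_n(L(𝒜)) ≥ ε for infinitely many n (indeed ε = 1/(|A|^{2|Q|} · |Q|) works); in particular the sequence μ_n(L(𝒜)) does not converge to 0. -/
open Filter

/-!
Fix a word `s₀` of length `< |Q|` leading to `q`. Since `q` can be reached back from every state
reachable from it, each word `t` of length `m` extends to `t u_t` with `q · t u_t = q` and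
`|u_t| < |Q|`, so every `s₀ t u_t` is accepted. By pigeonhole, some length `d < |Q|` is taken by
`|u_t|` for at least `|A|^m / |Q|` words `t`; these give that many distinct accepted words of length
`|s₀| + m + d ≤ m + 2|Q|`, i.e. density at least `1 / (|A|^(2|Q|) |Q|)`, for every `m`.
-/

open Finset

section

variable {A σ : Type*}

theorem Reachable.exists_length_lt_card [Fintype σ] {M : DFA A σ} {q q' : σ}
    (h : Reachable M q q') : ∃ t : List A, t.length < Fintype.card σ ∧ M.evalFrom q t = q' := by
  obtain ⟨s, hs⟩ := h
  induction hn : s.length using Nat.strong_induction_on generalizing s with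
  | _ n ih =>
    by_cases hlt : n < Fintype.card σ
    · exact ⟨s, hn ▸ hlt, hs⟩
    obtain ⟨_, x, y, z, rfl, -, hy, hx, -, hz⟩ := M.evalFrom_split (hn ▸ not_lt.1 hlt) hs
    refine ih (x ++ z).length ?_ (x ++ z) ?_ rfl
    · have := List.length_pos_iff.2 hy
      simp only [List.length_append] at hn ⊢
      omega
    · rw [DFA.evalFrom_of_append, hx, hz]

theorem le_mu_of_injOn [Fintype A] {ι : Type*} {L : Set (List A)} {n : ℕ} {S : Finset ι}
    {f : ι → List A} (hf : ∀ i ∈ S, (f i).length = n ∧ f i ∈ L) (hinj : Set.InjOn f S) :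
    (#S : ℝ) / (Fintype.card A : ℝ) ^ n ≤ mu L n := by
  have hfin : {s : List A | s.length = n ∧ s ∈ L}.Finite :=
    (List.finite_length_eq A n).subset fun _ hs => hs.1
  have hcard : #S ≤ Nat.card {s : List A // s.length = n ∧ s ∈ L} := by
    rw [← Set.ncard_coe_finset]
    exact Set.ncard_le_ncard_of_injOn f hf hinj hfin
  unfold mu
  gcongr

end

section

variable {A σ : Type*} [Fintype A] (M : DFA A σ)

theorem exists_le_mu_of_returns {q : σ} (hq : q ∈ M.accept) {s₀ : List A} (hs₀ : M.eval s₀ = q)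
    {c : ℕ} (hc : 0 < c) (hret : ∀ t, ∃ u : List A, u.length < c ∧ M.evalFrom q (t ++ u) = q)
    (m : ℕ) : ∃ d < c, (Fintype.card A : ℝ) ^ m / c / (Fintype.card A : ℝ) ^ (s₀.length + m + d)
      ≤ mu (langOf M) (s₀.length + m + d) := by
  choose r hrlen hr using hret
  obtain ⟨d, hd, hfiber⟩ := exists_le_card_fiber_of_nsmul_le_card_of_maps_to
    (s := (univ : Finset (Fin m → A))) (t := range c)
    (f := fun t => (r (List.ofFn t)).length) (fun t _ => mem_range.2 (hrlen _))
    ⟨0, mem_range.2 hc⟩ (b := (Fintype.card A : ℝ) ^ m / c)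
    (by simp [nsmul_eq_mul, mul_div_cancel₀, hc.ne'])
  refine ⟨d, mem_range.1 hd, le_trans (by gcongr) (le_mu_of_injOn
    (f := fun t => s₀ ++ (List.ofFn t ++ r (List.ofFn t))) ?_ ?_)⟩
  · intro t ht
    refine ⟨by simp [(mem_filter.1 ht).2, add_assoc], ?_⟩
    show M.evalFrom M.start _ ∈ M.accept
    rwa [DFA.evalFrom_of_append, ← DFA.eval, hs₀, hr]
  · intro t _ t' _ h
    have := (List.append_inj (List.append_cancel_left h) (by simp)).1
    exact List.ofFn_injective this

theorem frequently_le_mu_langOf [Nonempty A] [Fintype σ] {q : σ} (hq : q ∈ M.accept)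
    {s₀ : List A} (hs₀len : s₀.length < Fintype.card σ) (hs₀ : M.eval s₀ = q)
    (hret : ∀ t, ∃ u : List A, u.length < Fintype.card σ ∧ M.evalFrom q (t ++ u) = q) :
    ∃ᶠ n in atTop, 1 / ((Fintype.card A : ℝ) ^ (2 * Fintype.card σ) * Fintype.card σ)
      ≤ mu (langOf M) n := by
  set a : ℝ := (Fintype.card A : ℝ)
  set c := Fintype.card σ
  have ha : 1 ≤ a := Nat.one_le_cast.2 Fintype.card_pos
  refine frequently_atTop.2 fun m => ?_
  obtain ⟨d, hd, hmu⟩ := exists_le_mu_of_returns M hq hs₀ (by omega) hret m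
  refine ⟨s₀.length + m + d, by omega, le_trans ?_ hmu⟩
  have hc : (0 : ℝ) < c := by norm_cast; omega
  calc 1 / (a ^ (2 * c) * c) ≤ 1 / (a ^ (s₀.length + d) * c) := by
        gcongr
        omega
    _ = a ^ m / c / a ^ (s₀.length + m + d) := by
        rw [add_right_comm, pow_add _ (s₀.length + d)]
        field_simp

end

theorem mu_frequently_ge_of_sink {A σ : Type*} [Fintype A] [Nonempty A] [Fintype σ]
    (M : DFA A σ)
    (h : ∃ q ∈ M.accept, Reachable M M.start q ∧
      ∀ q' : σ, Reachable M q q' → Reachable M q' q) :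
    (∃ ε : ℝ, 0 < ε ∧
        ε = 1 / ((Fintype.card A : ℝ) ^ (2 * Fintype.card σ) * (Fintype.card σ : ℝ)) ∧
        (∃ᶠ n in Filter.atTop, ε ≤ mu (langOf M) n)) ∧
      ¬ Filter.Tendsto (mu (langOf M)) Filter.atTop (nhds 0) := by
  obtain ⟨q, hq, hstart, hsink⟩ := h
  obtain ⟨s₀, hs₀len, hs₀⟩ := hstart.exists_length_lt_card
  have hret (t : List A) : ∃ u : List A, u.length < Fintype.card σ ∧ M.evalFrom q (t ++ u) = q := by
    obtain ⟨u, hulen, hu⟩ := (hsink _ ⟨t, rfl⟩).exists_length_lt_card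
    exact ⟨u, hulen, by rw [DFA.evalFrom_of_append, hu]⟩
  have hfreq := frequently_le_mu_langOf M hq hs₀len hs₀ hret
  have hε : (0 : ℝ) < 1 / ((Fintype.card A : ℝ) ^ (2 * Fintype.card σ) * Fintype.card σ) := by
    have : Nonempty σ := ⟨q⟩
    positivity
  refine ⟨⟨_, hε, rfl, hfreq⟩, fun hlim => ?_⟩
  obtain ⟨n, hle, hlt⟩ := (hfreq.and_eventually (hlim.eventually (gt_mem_nhds hε))).exists
  exact hle.not_gt hlt
end
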